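/- Let X be a φ-prime submodule of M with φ(X) a submodule of M (φ(X) ≠ ∅). Then: (1) either (X:_R M) ⊆ √((φ(X):_R M)) or √((φ(X):_R M)) ⊆ (X:_R M); (2) if (X:_R M) ⊊ √((φ(X):_R M)), then X is not prime; (3) if √((φ(X):_R M)) ⊊ (X:_R M), then X is prime; (4) if φ(X) is a radical submodule of M, then either (X:_R M) = (φ(X):_R M) or X is prime. -/

import Mathlib

open MulOpposite Submodule

variable {R : Type*} [Ring R] {M : Type*} [AddCommGroup M] [Module Rᵐᵒᵖ M]

/-- The product `Y·A` of a set of elements of a right `R`-module `M` and a set of ring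
elements: the submodule of all finite sums `Σ yᵢ·aᵢ` with `yᵢ ∈ Y`, `aᵢ ∈ A`. -/
def sProd (Y : Set M) (A : Set R) : Submodule Rᵐᵒᵖ M :=
  Submodule.span Rᵐᵒᵖ {z | ∃ y ∈ Y, ∃ a ∈ A, z = op a • y}

/-- `(X :_R N) = {r : R | N·r ⊆ X}`. -/
def colR (X : Set M) (N : Set M) : Set R := {r | ∀ m ∈ N, op r • m ∈ X}

/-- `(X :_M A) = {m : M | m·A ⊆ X}`. -/
def colM (X : Set M) (A : Set R) : Set M := {m | ∀ r ∈ A, op r • m ∈ X}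

/-- A function `φ : S(M) → S(M) ∪ {∅}` (values are either `∅` or submodules) with
`φ(X) ⊆ X` for every submodule `X`. -/
def GoodPhi (φ : Submodule Rᵐᵒᵖ M → Set M) : Prop :=
  ∀ N : Submodule Rᵐᵒᵖ M, φ N ⊆ N ∧
    (φ N = (∅ : Set M) ∨ ∃ P : Submodule Rᵐᵒᵖ M, φ N = (P : Set M))

/-- `X` is a φ-prime submodule of the right `R`-module `M`. -/
def PhiPrime (φ : Submodule Rᵐᵒᵖ M → Set M) (X : Submodule Rᵐᵒᵖ M) : Prop :=
  X ≠ ⊤ ∧ ∀ (Y : Submodule Rᵐᵒᵖ M) (I : TwoSidedIdeal R),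
    (sProd (Y : Set M) (I : Set R) : Set M) ⊆ (X : Set M) →
    ¬((sProd (Y : Set M) (I : Set R) : Set M) ⊆ φ X) →
    (Y : Set M) ⊆ (X : Set M) ∨ (I : Set R) ⊆ colR (X : Set M) Set.univ

/-- `X` is a prime submodule of the right `R`-module `M`. -/
def PrimeSub (X : Submodule Rᵐᵒᵖ M) : Prop :=
  X ≠ ⊤ ∧ ∀ (Y : Submodule Rᵐᵒᵖ M) (I : TwoSidedIdeal R),
    (sProd (Y : Set M) (I : Set R) : Set M) ⊆ (X : Set M) →
    (Y : Set M) ⊆ (X : Set M) ∨ (I : Set R) ⊆ colR (X : Set M) Set.univ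

/-- `X` is a weakly prime submodule of the right `R`-module `M`. -/
def WeaklyPrime (X : Submodule Rᵐᵒᵖ M) : Prop :=
  X ≠ ⊤ ∧ ∀ (Y : Submodule Rᵐᵒᵖ M) (I : TwoSidedIdeal R),
    sProd (Y : Set M) (I : Set R) ≠ ⊥ →
    (sProd (Y : Set M) (I : Set R) : Set M) ⊆ (X : Set M) →
    (Y : Set M) ⊆ (X : Set M) ∨ (I : Set R) ⊆ colR (X : Set M) Set.univ

/-- `X` is an almost prime submodule of the right `R`-module `M`. -/
def AlmostPrime (X : Submodule Rᵐᵒᵖ M) : Prop :=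
  X ≠ ⊤ ∧ ∀ (Y : Submodule Rᵐᵒᵖ M) (I : TwoSidedIdeal R),
    (sProd (Y : Set M) (I : Set R) : Set M) ⊆ (X : Set M) →
    ¬((sProd (Y : Set M) (I : Set R) : Set M) ⊆
        (sProd (X : Set M) ((colR (X : Set M) Set.univ : Set R)) : Set M)) →
    (Y : Set M) ⊆ (X : Set M) ∨ (I : Set R) ⊆ colR (X : Set M) Set.univ

/-- `powAct X n = X (X :_R M)ⁿ`. -/
def powAct (X : Submodule Rᵐᵒᵖ M) : ℕ → Submodule Rᵐᵒᵖ M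
  | 0 => X
  | n + 1 => sProd (powAct X n : Set M) ((colR (X : Set M) Set.univ : Set R))

/-- The product of two sets of ring elements: all finite sums `Σ aᵢbᵢ`, `aᵢ ∈ A`, `bᵢ ∈ B`. -/
def idMul (A B : Set R) : Set R :=
  (AddSubmonoid.closure {x | ∃ a ∈ A, ∃ b ∈ B, x = a * b} : AddSubmonoid R)

/-- A prime (two-sided) ideal of a possibly noncommutative ring. -/
def TIPrime (P : TwoSidedIdeal R) : Prop :=
  (P : Set R) ≠ Set.univ ∧ ∀ I J : TwoSidedIdeal R,
    idMul (I : Set R) (J : Set R) ⊆ (P : Set R) →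
    (I : Set R) ⊆ (P : Set R) ∨ (J : Set R) ⊆ (P : Set R)

/-- The radical `√A`: the intersection of all prime two-sided ideals containing `A`. -/
def radSet (A : Set R) : Set R :=
  {x | ∀ P : TwoSidedIdeal R, TIPrime P → A ⊆ (P : Set R) → x ∈ (P : Set R)}

/-- A ψ-prime two-sided ideal of a possibly noncommutative ring. -/
def PsiPrime (ψ : TwoSidedIdeal R → Set R) (A : TwoSidedIdeal R) : Prop :=
  (A : Set R) ≠ Set.univ ∧ ∀ I J : TwoSidedIdeal R,
    idMul (I : Set R) (J : Set R) ⊆ (A : Set R) →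
    ¬(idMul (I : Set R) (J : Set R) ⊆ ψ A) →
    (I : Set R) ⊆ (A : Set R) ∨ (J : Set R) ⊆ (A : Set R)

/-- The induced function `φ_Y` on submodules of `M/Y`: `φ_Y(X/Y) = (φ(X)+Y)/Y`. -/
def phiQuot (φ : Submodule Rᵐᵒᵖ M → Set M) (Y : Submodule Rᵐᵒᵖ M) :
    Submodule Rᵐᵒᵖ (M ⧸ Y) → Set (M ⧸ Y) :=
  fun Q => Y.mkQ '' (φ (Q.comap Y.mkQ))

/-- The colon `(X :_R Y)` of two submodules, as a two-sided ideal of `R`. -/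
def colTI (X Y : Submodule Rᵐᵒᵖ M) : TwoSidedIdeal R :=
  TwoSidedIdeal.mk' (colR (X : Set M) (Y : Set M))
    (by intro m hm; simp)
    (by intro x y hx hy m hm
        rw [op_add, add_smul]
        exact X.add_mem (hx m hm) (hy m hm))
    (by intro x hx m hm
        rw [op_neg, neg_smul]
        exact X.neg_mem (hx m hm))
    (by intro x y hy m hm
        rw [op_mul, mul_smul]
        exact hy _ (Y.smul_mem (op x) hm))
    (by intro x y hx m hm
        rw [op_mul, mul_smul]
        exact X.smul_mem (op y) (hx m hm))

/-- The colon `(X :_M I)` as a submodule of `M`, for a two-sided ideal `I`. -/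
def colMS (X : Submodule Rᵐᵒᵖ M) (I : TwoSidedIdeal R) : Submodule Rᵐᵒᵖ M where
  carrier := colM (X : Set M) (I : Set R)
  add_mem' := by
    intro a b ha hb r hr
    rw [smul_add]
    exact X.add_mem (ha r hr) (hb r hr)
  zero_mem' := by
    intro r hr
    rw [smul_zero]
    exact X.zero_mem
  smul_mem' := by
    intro c m hm r hr
    rw [← mul_smul, show op r * c = op (unop c * r) from by rw [op_mul, op_unop]]
    exact hm _ (I.mul_mem_left _ _ hr)

/-- `M` is a multiplication right `R`-module: every submodule `X` equals `M(X :_R M)`. -/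
def IsMultiplication (R : Type*) [Ring R] (M : Type*) [AddCommGroup M]
    [Module Rᵐᵒᵖ M] : Prop :=
  ∀ X : Submodule Rᵐᵒᵖ M, X = sProd (Set.univ : Set M) ((colR (X : Set M) Set.univ : Set R))

/-- The product `XY = M(X :_R M)(Y :_R M)` of two submodules of a multiplication module. -/
def mprod (X Y : Submodule Rᵐᵒᵖ M) : Submodule Rᵐᵒᵖ M :=
  sProd ((sProd (Set.univ : Set M) ((colR (X : Set M) Set.univ : Set R)) : Submodule Rᵐᵒᵖ M) : Set M)
    ((colR (Y : Set M) Set.univ : Set R))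

/-- A φ-m-system in a right `R`-module `M`. -/
def PhiMSystem (φ : Submodule Rᵐᵒᵖ M → Set M) (S : Set M) : Prop :=
  S.Nonempty ∧ ∀ (Y₁ Y₂ : Submodule Rᵐᵒᵖ M) (I : TwoSidedIdeal R),
    ((Y₁ ⊔ Y₂ : Submodule Rᵐᵒᵖ M) : Set M) ∩ S ≠ ∅ →
    ((Y₁ ⊔ sProd (Set.univ : Set M) (I : Set R) : Submodule Rᵐᵒᵖ M) : Set M) ∩ S ≠ ∅ →
    ¬((sProd (Y₂ : Set M) (I : Set R) : Set M) ⊆ φ (Submodule.span Rᵐᵒᵖ Sᶜ)) →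
    ((Y₁ ⊔ sProd (Y₂ : Set M) (I : Set R) : Submodule Rᵐᵒᵖ M) : Set M) ∩ S ≠ ∅

/-!
If `X` is φ-prime but not prime, pick `Y`, `I` with `YI ⊆ X`, `Y ⊄ X`, `I ⊄ (X :_R M)`. Then
`(Y + X)(I + (X :_R M)) ⊆ X` while neither factor shrinks into `X` resp. `(X :_R M)`, so
φ-primeness forces `(Y + X)(I + (X :_R M)) ⊆ φ(X)`; in particular `X(X :_R M) ⊆ φ(X)`, hence
`(X :_R M)² ⊆ (φ(X) :_R M)` and `(X :_R M) ⊆ √((φ(X) :_R M))`. If instead `X` is prime, then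
`(X :_R M)` is a prime ideal containing `(φ(X) :_R M)`, so `√((φ(X) :_R M)) ⊆ (X :_R M)`.
All four claims follow from this dichotomy.
-/

theorem smul_mem_sProd {Y : Set M} {A : Set R} {y : M} {a : R} (hy : y ∈ Y) (ha : a ∈ A) :
    op a • y ∈ sProd Y A :=
  subset_span ⟨y, hy, a, ha, rfl⟩

theorem sProd_le_iff {Y : Set M} {A : Set R} {N : Submodule Rᵐᵒᵖ M} :
    sProd Y A ≤ N ↔ ∀ y ∈ Y, ∀ a ∈ A, op a • y ∈ N := by
  rw [sProd, span_le]
  exact ⟨fun h y hy a ha => h ⟨y, hy, a, ha, rfl⟩, fun h _ ⟨y, hy, a, ha, hz⟩ => hz ▸ h y hy a ha⟩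

theorem sProd_mono {Y₁ Y₂ : Set M} {A₁ A₂ : Set R} (hY : Y₁ ⊆ Y₂) (hA : A₁ ⊆ A₂) :
    sProd Y₁ A₁ ≤ sProd Y₂ A₂ :=
  sProd_le_iff.2 fun _ hy _ ha => smul_mem_sProd (hY hy) (hA ha)

theorem colR_mono {X X' : Set M} (N : Set M) (h : X ⊆ X') : colR X N ⊆ (colR X' N : Set R) :=
  fun _ hr m hm => h (hr m hm)

theorem coe_colTI_top (X : Submodule Rᵐᵒᵖ M) :
    (colTI X ⊤ : Set R) = colR (X : Set M) Set.univ := by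
  simp [colTI, colR]

theorem mem_colTI_top {X : Submodule Rᵐᵒᵖ M} {r : R} :
    r ∈ colTI X ⊤ ↔ ∀ m : M, op r • m ∈ X := by
  rw [← SetLike.mem_coe, coe_colTI_top]
  simp [colR]

theorem idMul_subset {A B : Set R} {P : TwoSidedIdeal R} (h : ∀ a ∈ A, ∀ b ∈ B, a * b ∈ P) :
    idMul A B ⊆ P := fun _ hx =>
  AddSubmonoid.closure_induction (fun _ ⟨a, ha, b, hb, hab⟩ => hab ▸ h a ha b hb)
    (zero_mem P) (fun _ _ _ _ => add_mem) hx

theorem subset_radSet_of_mul_mem {I : TwoSidedIdeal R} {A : Set R}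
    (h : ∀ a ∈ I, ∀ b ∈ I, a * b ∈ A) : (I : Set R) ⊆ radSet A := fun _ hx _ hP hAP =>
  (hP.2 I I (idMul_subset fun a ha b hb => hAP (h a ha b hb))).elim (· hx) (· hx)

theorem PrimeSub.tiPrime_colTI {X : Submodule Rᵐᵒᵖ M} (hX : PrimeSub X) :
    TIPrime (colTI X ⊤) := by
  refine ⟨fun htop => hX.1 (eq_top_iff'.2 fun m => ?_), fun I J hIJ => ?_⟩
  · have h1 : (1 : R) ∈ (colTI X ⊤ : Set R) := htop ▸ Set.mem_univ 1
    simpa using mem_colTI_top.1 h1 m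
  have hMI : sProd (Set.univ : Set M) (I : Set R) ≤ colMS X J :=
    sProd_le_iff.2 fun m _ a ha b hb => by
      rw [← mul_smul, ← op_mul]
      exact mem_colTI_top.1 (hIJ (AddSubmonoid.subset_closure ⟨a, ha, b, hb, rfl⟩)) m
  rcases hX.2 _ J (sProd_le_iff.2 fun y hy b hb => hMI hy b hb) with hI | hJ
  · exact Or.inl fun a ha => mem_colTI_top.2 fun m => hI (smul_mem_sProd (Set.mem_univ m) ha)
  · exact Or.inr (by rwa [coe_colTI_top])

theorem PrimeSub.radSet_subset_colR {X : Submodule Rᵐᵒᵖ M} (hX : PrimeSub X) {A : Set R}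
    (hA : A ⊆ colR (X : Set M) Set.univ) : radSet A ⊆ colR (X : Set M) Set.univ := by
  rw [← coe_colTI_top] at hA ⊢
  exact fun _ hx => hx _ hX.tiPrime_colTI hA

section

variable {φ : Submodule Rᵐᵒᵖ M → Set M} {X : Submodule Rᵐᵒᵖ M}

theorem PhiPrime.sProd_colR_subset_of_not_primeSub (hX : PhiPrime φ X) (hnp : ¬ PrimeSub X) :
    (sProd (X : Set M) (colR (X : Set M) Set.univ : Set R) : Set M) ⊆ φ X := by
  obtain ⟨Y, I, hYI, hYX, hIX⟩ : ∃ (Y : Submodule Rᵐᵒᵖ M) (I : TwoSidedIdeal R),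
      sProd (Y : Set M) (I : Set R) ≤ X ∧ ¬ Y ≤ X ∧ ¬ (I : Set R) ⊆ colR (X : Set M) Set.univ := by
    simpa [PrimeSub, hX.1] using hnp
  have hprod :
      sProd ((Y ⊔ X : Submodule Rᵐᵒᵖ M) : Set M) (I ⊔ colTI X ⊤ : TwoSidedIdeal R) ≤ X := by
    refine sProd_le_iff.2 fun _ hyx _ hia => ?_
    obtain ⟨y, hy, x, hx, rfl⟩ := mem_sup.1 hyx
    obtain ⟨i, hi, a, ha, rfl⟩ := TwoSidedIdeal.mem_sup.1 hia
    rw [op_add, add_smul, smul_add]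
    exact X.add_mem (X.add_mem (sProd_le_iff.1 hYI y hy i hi) (X.smul_mem _ hx))
      (mem_colTI_top.1 ha _)
  have hXA : (colR (X : Set M) Set.univ : Set R) ⊆ (I ⊔ colTI X ⊤ : TwoSidedIdeal R) :=
    fun a ha => TwoSidedIdeal.mem_sup_right (by rwa [← SetLike.mem_coe, coe_colTI_top])
  by_contra hXφ
  have hXY : (X : Set M) ⊆ (Y ⊔ X : Submodule Rᵐᵒᵖ M) := SetLike.coe_subset_coe.2 le_sup_right
  rcases hX.2 _ _ hprod fun hφ => hXφ (subset_trans (sProd_mono hXY hXA) hφ) with h | h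
  · exact hYX (le_sup_left.trans h)
  · exact hIX fun i hi => by simpa [coe_colTI_top] using h (TwoSidedIdeal.mem_sup_left hi)

theorem PhiPrime.colR_subset_radSet_of_not_primeSub (hX : PhiPrime φ X) (hnp : ¬ PrimeSub X) :
    (colR (X : Set M) Set.univ : Set R) ⊆ radSet (colR (φ X) Set.univ) := by
  rw [← coe_colTI_top]
  refine subset_radSet_of_mul_mem fun a ha b hb m _ => ?_
  rw [op_mul, mul_smul]
  exact hX.sProd_colR_subset_of_not_primeSub hnp
    (smul_mem_sProd (mem_colTI_top.1 ha m) (by rwa [← SetLike.mem_coe, coe_colTI_top] at hb))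

end

theorem stmt_5_general (φ : Submodule Rᵐᵒᵖ M → Set M) (hφ : GoodPhi φ)
    (X : Submodule Rᵐᵒᵖ M) (hX : PhiPrime φ X) :
    ((colR (X : Set M) Set.univ : Set R) ⊆ radSet (colR (φ X) Set.univ) ∨
      radSet (colR (φ X) Set.univ) ⊆ (colR (X : Set M) Set.univ : Set R)) ∧
    ((colR (X : Set M) Set.univ : Set R) ⊂ radSet (colR (φ X) Set.univ) →
      ¬ PrimeSub X) ∧
    (radSet (colR (φ X) Set.univ) ⊂ (colR (X : Set M) Set.univ : Set R) →
      PrimeSub X) ∧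
    (radSet (colR (φ X) Set.univ) = (colR (φ X) Set.univ : Set R) →
      (colR (X : Set M) Set.univ : Set R) = (colR (φ X) Set.univ : Set R) ∨
        PrimeSub X) := by
  have hφX : colR (φ X) Set.univ ⊆ (colR (X : Set M) Set.univ : Set R) :=
    colR_mono Set.univ (hφ X).1
  have hprime (hp : PrimeSub X) := hp.radSet_subset_colR hφX
  have hnot (hnp : ¬ PrimeSub X) := hX.colR_subset_radSet_of_not_primeSub hnp
  refine ⟨?_, fun hss hp => hss.2 (hprime hp), fun hss => not_not.1 fun hnp => hss.2 (hnot hnp),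
    fun hrad => ?_⟩
  · by_cases hp : PrimeSub X
    exacts [Or.inr (hprime hp), Or.inl (hnot hp)]
  · by_cases hp : PrimeSub X
    exacts [Or.inr hp, Or.inl ((hrad ▸ hnot hp).antisymm hφX)]

/-- Let `X` be a φ-prime submodule of `M` with `φ(X)` a submodule
(in particular `φ(X) ≠ ∅`). Then: (1) `(X :_R M) ⊆ √((φ(X) :_R M))` or
`√((φ(X) :_R M)) ⊆ (X :_R M)`; (2) if `(X :_R M) ⊊ √((φ(X) :_R M))` then `X` is not
prime; (3) if `√((φ(X) :_R M)) ⊊ (X :_R M)` then `X` is prime; (4) if `φ(X)` is a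
radical submodule then `(X :_R M) = (φ(X) :_R M)` or `X` is prime. -/
theorem stmt_5 (φ : Submodule Rᵐᵒᵖ M → Set M) (hφ : GoodPhi φ)
    (X : Submodule Rᵐᵒᵖ M) (hX : PhiPrime φ X)
    (hne : ∃ P : Submodule Rᵐᵒᵖ M, φ X = (P : Set M)) :
    ((colR (X : Set M) Set.univ : Set R) ⊆ radSet (colR (φ X) Set.univ) ∨
      radSet (colR (φ X) Set.univ) ⊆ (colR (X : Set M) Set.univ : Set R)) ∧
    ((colR (X : Set M) Set.univ : Set R) ⊂ radSet (colR (φ X) Set.univ) →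
      ¬ PrimeSub X) ∧
    (radSet (colR (φ X) Set.univ) ⊂ (colR (X : Set M) Set.univ : Set R) →
      PrimeSub X) ∧
    (radSet (colR (φ X) Set.univ) = (colR (φ X) Set.univ : Set R) →
      (colR (X : Set M) Set.univ : Set R) = (colR (φ X) Set.univ : Set R) ∨
        PrimeSub X) :=
  stmt_5_general φ hφ X hX
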